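/- arXiv:2006.14769 — 2 statements merged into one kernel-verified Lean document; each statement's English description precedes it below -/
import Mathlib

section
/- On a probability space, let ξ be a random variable with P(ξ = 1) = P(ξ = −1) = 1/2, and let (B, φ, s, t, C) be real random variables independent of ξ with s ≥ 0, t ≥ 0 and C > 0 almost surely and E[|φ| t] < ∞. With σ_C(x) = exp(x)/(exp(x) + C), the random variable Z = φ t ξ σ_C(B + φ s ξ) is integrable and E[Z] ≥ 0. (A precise form of Lemma B.1 of the paper: the expected product of a symmetric random sign, a nonnegative mask factor, a feature value, and the resulting softmax probability of a superfluous neuron is nonnegative.) -/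
/-!
Since `ξ` is a fair sign independent of the other variables, splitting on `ξ = ±1` gives
`E[Z] = ½ E[φ t (σ_C(B + φ s) - σ_C(B - φ s))]`. The integrand is pointwise nonnegative:
`σ_C` is increasing, so `σ_C(B + φ s) - σ_C(B - φ s)` has the sign of `φ` when `s ≥ 0`.
Integrability comes from `|Z| ≤ |φ| t`, as `0 ≤ σ_C ≤ 1`.
-/

open MeasureTheory ProbabilityTheory Real

noncomputable def softmaxProb (c x : ℝ) : ℝ := exp x / (exp x + c)

lemma softmaxProb_eq_sigmoid {c : ℝ} (hc : 0 < c) (x : ℝ) :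
    softmaxProb c x = sigmoid (x - log c) := by
  rw [softmaxProb, sigmoid_def, neg_sub, exp_sub, exp_log hc]
  field_simp

lemma softmaxProb_nonneg {c : ℝ} (hc : 0 < c) (x : ℝ) : 0 ≤ softmaxProb c x := by
  rw [softmaxProb_eq_sigmoid hc]; exact sigmoid_nonneg _

lemma softmaxProb_le_one {c : ℝ} (hc : 0 < c) (x : ℝ) : softmaxProb c x ≤ 1 := by
  rw [softmaxProb_eq_sigmoid hc]; exact sigmoid_le_one _

lemma softmaxProb_monotone {c : ℝ} (hc : 0 < c) : Monotone (softmaxProb c) := fun a b hab => by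
  simp only [softmaxProb_eq_sigmoid hc]
  exact sigmoid_le (by linarith)

lemma mul_softmaxProb_add_sub_nonneg {c s : ℝ} (hc : 0 < c) (hs : 0 ≤ s) (b y : ℝ) :
    0 ≤ y * (softmaxProb c (b + y * s) - softmaxProb c (b - y * s)) := by
  rcases le_total 0 y with hy | hy
  · exact mul_nonneg hy (sub_nonneg.2 (softmaxProb_monotone hc (by nlinarith)))
  · exact mul_nonneg_of_nonpos_of_nonpos hy
      (sub_nonpos.2 (softmaxProb_monotone hc (by nlinarith)))

lemma abs_mul_mul_softmaxProb_le {c t x : ℝ} (hc : 0 < c) (ht : 0 ≤ t) (hx : |x| ≤ 1)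
    (y u : ℝ) : |y * t * x * softmaxProb c u| ≤ |y| * t := by
  rw [abs_mul, abs_mul, abs_mul, abs_of_nonneg ht, abs_of_nonneg (softmaxProb_nonneg hc u)]
  calc |y| * t * |x| * softmaxProb c u ≤ |y| * t * 1 * 1 := by
        gcongr
        exacts [softmaxProb_nonneg hc u, softmaxProb_le_one hc u]
    _ = |y| * t := by ring

section Rademacher

variable {Ω α β : Type*} [MeasurableSpace Ω] {μ : Measure Ω} {ξ : Ω → ℝ}

lemma comp_ae_eq_indicator_add_indicator (hξ : ∀ᵐ ω ∂μ, ξ ω = 1 ∨ ξ ω = -1)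
    (F : ℝ → β → ℝ) (V : Ω → β) :
    (fun ω => F (ξ ω) (V ω)) =ᵐ[μ]
      (ξ ⁻¹' {1}).indicator (fun ω => F 1 (V ω)) +
        (ξ ⁻¹' {-1}).indicator (fun ω => F (-1) (V ω)) := by
  filter_upwards [hξ] with ω hω
  rcases hω with h | h <;> norm_num [h]

variable [MeasurableSpace α] [MeasurableSpace β]

lemma ProbabilityTheory.IndepFun.integral_indicator_preimage {X : Ω → α} {Y : Ω → β}
    (hXY : IndepFun X Y μ) (hX : Measurable X) (hY : AEMeasurable Y μ) {g : β → ℝ}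
    (hg : AEStronglyMeasurable g (μ.map Y)) {A : Set α} (hA : MeasurableSet A) :
    ∫ ω, (X ⁻¹' A).indicator (fun ω => g (Y ω)) ω ∂μ =
      μ.real (X ⁻¹' A) * ∫ ω, g (Y ω) ∂μ := by
  have hmul : (X ⁻¹' A).indicator (fun ω => g (Y ω)) =
      fun ω => A.indicator 1 (X ω) * g (Y ω) := by
    ext ω
    by_cases h : X ω ∈ A <;> simp [Set.indicator_of_mem, Set.indicator_of_notMem, h]
  rw [hmul, hXY.integral_fun_comp_mul_comp hX.aemeasurable hY
    ((measurable_one.indicator hA).aestronglyMeasurable) hg]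
  congr 1
  rw [← integral_indicator_one (hX hA)]
  rfl

variable [IsProbabilityMeasure μ]

lemma ae_eq_one_or_eq_neg_one (hξ : Measurable ξ) (h1 : μ (ξ ⁻¹' {1}) = 1 / 2)
    (h2 : μ (ξ ⁻¹' {-1}) = 1 / 2) : ∀ᵐ ω ∂μ, ξ ω = 1 ∨ ξ ω = -1 := by
  have hdisj : Disjoint (ξ ⁻¹' {1}) (ξ ⁻¹' {-1}) :=
    Disjoint.preimage _ (Set.disjoint_singleton.2 (by norm_num))
  have hmeas : MeasurableSet (ξ ⁻¹' {1} ∪ ξ ⁻¹' {-1}) :=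
    (hξ (measurableSet_singleton _)).union (hξ (measurableSet_singleton _))
  refine (ae_mem_iff_measure_eq hmeas.nullMeasurableSet).2 ?_
  rw [measure_union hdisj (hξ (measurableSet_singleton _)), h1, h2, measure_univ,
    ENNReal.add_halves]

lemma integrable_and_integral_eq_of_indepFun_rademacher (hξ : Measurable ξ)
    (h1 : μ (ξ ⁻¹' {1}) = 1 / 2) (h2 : μ (ξ ⁻¹' {-1}) = 1 / 2) {V : Ω → β}
    (hV : Measurable V) (hξV : IndepFun ξ V μ) {F : ℝ → β → ℝ} (hF : ∀ x, Measurable (F x))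
    (hF1 : Integrable (fun ω => F 1 (V ω)) μ)
    (hF2 : Integrable (fun ω => F (-1) (V ω)) μ) :
    Integrable (fun ω => F (ξ ω) (V ω)) μ ∧
      ∫ ω, F (ξ ω) (V ω) ∂μ = (∫ ω, F 1 (V ω) ∂μ + ∫ ω, F (-1) (V ω) ∂μ) / 2 := by
  have hae := comp_ae_eq_indicator_add_indicator (ae_eq_one_or_eq_neg_one hξ h1 h2) F V
  have hmeas (a : ℝ) : MeasurableSet (ξ ⁻¹' {a}) := hξ (measurableSet_singleton a)
  have hhalf (a : ℝ) (ha : μ (ξ ⁻¹' {a}) = 1 / 2) : μ.real (ξ ⁻¹' {a}) = 1 / 2 := by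
    simp [measureReal_def, ha]
  have hI1 := hF1.indicator (hmeas 1)
  have hI2 := hF2.indicator (hmeas (-1))
  refine ⟨(hI1.add hI2).congr hae.symm, ?_⟩
  rw [integral_congr_ae hae, integral_add' hI1 hI2,
    hξV.integral_indicator_preimage hξ hV.aemeasurable (hF 1).aestronglyMeasurable
      (measurableSet_singleton 1),
    hξV.integral_indicator_preimage hξ hV.aemeasurable (hF (-1)).aestronglyMeasurable
      (measurableSet_singleton (-1)), hhalf 1 h1, hhalf (-1) h2]
  ring

end Rademacher

/-- **Lemma B.1, precise form.** Let `ξ` be a fair random sign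
(`P(ξ = 1) = P(ξ = -1) = 1/2`) and let `(B, φ, s, t, C)` be real random
variables independent of `ξ` with `s ≥ 0`, `t ≥ 0`, `C > 0` almost surely and
`E[|φ| t] < ∞`. With `σ_C(x) = exp x / (exp x + C)`, the random variable
`Z = φ t ξ σ_C (B + φ s ξ)` is integrable and `E[Z] ≥ 0`. -/
theorem expectation_sign_sigmoid_nonneg
    {Ω : Type*} [MeasurableSpace Ω] (μ : Measure Ω) [IsProbabilityMeasure μ]
    (ξ B φ s t C : Ω → ℝ)
    (hξm : Measurable ξ) (hBm : Measurable B) (hφm : Measurable φ)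
    (hsm : Measurable s) (htm : Measurable t) (hCm : Measurable C)
    (hξ1 : μ (ξ ⁻¹' {1}) = 1 / 2) (hξneg1 : μ (ξ ⁻¹' {-1}) = 1 / 2)
    (hindep : ProbabilityTheory.IndepFun ξ (fun ω => (B ω, φ ω, s ω, t ω, C ω)) μ)
    (hs0 : ∀ᵐ ω ∂μ, 0 ≤ s ω) (ht0 : ∀ᵐ ω ∂μ, 0 ≤ t ω) (hC0 : ∀ᵐ ω ∂μ, 0 < C ω)
    (hint : Integrable (fun ω => |φ ω| * t ω) μ) :
    Integrable (fun ω => φ ω * t ω * ξ ω *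
        (Real.exp (B ω + φ ω * s ω * ξ ω) /
          (Real.exp (B ω + φ ω * s ω * ξ ω) + C ω))) μ ∧
    0 ≤ ∫ ω, φ ω * t ω * ξ ω *
        (Real.exp (B ω + φ ω * s ω * ξ ω) /
          (Real.exp (B ω + φ ω * s ω * ξ ω) + C ω)) ∂μ := by
  set V : Ω → ℝ × ℝ × ℝ × ℝ × ℝ := fun ω => (B ω, φ ω, s ω, t ω, C ω)
  set F : ℝ → ℝ × ℝ × ℝ × ℝ × ℝ → ℝ := fun x v =>
    v.2.1 * v.2.2.2.1 * x * softmaxProb v.2.2.2.2 (v.1 + v.2.1 * v.2.2.1 * x)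
  have hV : Measurable V := by fun_prop
  have hF (x : ℝ) : Measurable (F x) := by simp only [F, softmaxProb]; fun_prop
  have hFint (x : ℝ) (hx : |x| ≤ 1) : Integrable (fun ω => F x (V ω)) μ := by
    refine hint.mono' ((hF x).comp hV).aestronglyMeasurable ?_
    filter_upwards [ht0, hC0] with ω ht hC
    exact abs_mul_mul_softmaxProb_le hC ht hx _ _
  have hF1 := hFint 1 (by norm_num)
  have hF2 := hFint (-1) (by norm_num)
  obtain ⟨hZint, hZ⟩ :=
    integrable_and_integral_eq_of_indepFun_rademacher hξm hξ1 hξneg1 hV hindep hF hF1 hF2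
  refine ⟨hZint, ?_⟩
  show 0 ≤ ∫ ω, F (ξ ω) (V ω) ∂μ
  rw [hZ, ← integral_add hF1 hF2]
  refine div_nonneg (integral_nonneg_of_ae ?_) zero_le_two
  filter_upwards [hs0, ht0, hC0] with ω hs ht hC
  have hsum : F 1 (V ω) + F (-1) (V ω) = t ω * (φ ω *
      (softmaxProb (C ω) (B ω + φ ω * s ω) - softmaxProb (C ω) (B ω - φ ω * s ω))) := by
    simp only [F, V, mul_one, mul_neg, ← sub_eq_add_neg]
    ring
  exact hsum ▸ mul_nonneg ht (mul_softmaxProb_add_sub_nonneg hC hs _ _)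
end

section
/- Fix positive integers m, n ≥ 2, k, an index v ∈ {1,…,n}, an index i ∈ {1,…,k}, and coefficients α_1,…,α_k ≥ 0. On a probability space let φ = (φ_1,…,φ_m) be a real random vector with E[|φ_u|] < ∞ for each u, let M^1,…,M^k be random m×n matrices with entries in {0,1}, and let (ξ_{u w})_{u ≤ m, w ≤ n} be i.i.d. random variables uniform on {−1, +1} such that the family (ξ_{u w}) is independent of (φ, M^1,…,M^k). Define W_{u w} = ξ_{u w}·√(2/m), logits y_w = ∑_{u=1}^m φ_u W_{u w} (∑_{ω=1}^k α_ω M^ω_{u w}), and p_v = exp(y_v)/∑_{w=1}^n exp(y_w). Then for every u, E[p_v φ_u ξ_{u v} M^i_{u v}] ≥ 0; consequently E[∑_{v=1}^n ∑_{u=1}^m p_v φ_u ξ_{u v} M^i_{u v}] ≥ 0, i.e. the expected negative partial derivative of G(y) = log(∑_{w=1}^n exp(y_w)) with respect to the mask coefficient α_i satisfies E[−∂G/∂α_i] ≤ 0. (Lemma 2 of the paper, under the independence hypotheses made precise.) -/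
/-!
Flipping the single sign `ξ u w` preserves the joint law of `(ξ, (φ, M))`, since the signs are
symmetric, independent of each other and independent of `(φ, M)`. The flip turns the integrand
`p_w φ_u ξ_{uw} M^i_{uw}` into `-p'_w φ_u ξ_{uw} M^i_{uw}`, where `p'` is the softmax after the
logit `y_w` has moved from `R + r e` to `R - r e`, with `r = φ_u ξ_{uw}` and
`e = √(2/m) ∑ⱼ αⱼ M^j_{uw} ≥ 0`. As softmax is increasing in its own logit, the sum
`r (p_w - p'_w) M^i_{uw}` of the integrand and its flip is pointwise nonnegative, so twice the
expectation is nonnegative.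
-/

open MeasureTheory ProbabilityTheory Function

section Rademacher

noncomputable def rademacher : Measure ℝ := (2 : ENNReal)⁻¹ • (Measure.dirac 1 + Measure.dirac (-1))

lemma measurePreserving_neg_rademacher : MeasurePreserving Neg.neg rademacher rademacher := by
  refine ⟨measurable_neg, ?_⟩
  rw [rademacher, Measure.map_smul, Measure.map_add _ _ measurable_neg,
    Measure.map_dirac' measurable_neg, Measure.map_dirac' measurable_neg, neg_neg, add_comm]

variable {Ω : Type*} [MeasurableSpace Ω] {μ : Measure Ω} [IsProbabilityMeasure μ] {g : Ω → ℝ}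

lemma ae_map_mem_one_neg_one (hg : Measurable g) (h1 : μ (g ⁻¹' {1}) = 1 / 2)
    (hneg1 : μ (g ⁻¹' {-1}) = 1 / 2) : ∀ᵐ x ∂μ.map g, x ∈ ({1} ∪ {-1} : Set ℝ) := by
  have := Measure.isProbabilityMeasure_map (μ := μ) hg.aemeasurable
  have hdisj : Disjoint ({1} : Set ℝ) {-1} := by norm_num
  rw [ae_mem_iff_measure_eq (measurableSet_singleton _ |>.union
    (measurableSet_singleton _)).nullMeasurableSet, measure_union hdisj (measurableSet_singleton _),
    Measure.map_apply hg (measurableSet_singleton _),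
    Measure.map_apply hg (measurableSet_singleton _), h1, hneg1, ENNReal.add_halves, measure_univ]

lemma map_eq_rademacher (hg : Measurable g) (h1 : μ (g ⁻¹' {1}) = 1 / 2)
    (hneg1 : μ (g ⁻¹' {-1}) = 1 / 2) : μ.map g = rademacher := by
  have hdisj : Disjoint ({1} : Set ℝ) {-1} := by norm_num
  rw [← Measure.restrict_eq_self_of_ae_mem (ae_map_mem_one_neg_one hg h1 hneg1),
    Measure.restrict_union hdisj (measurableSet_singleton _), Measure.restrict_singleton,
    Measure.restrict_singleton, Measure.map_apply hg (measurableSet_singleton _),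
    Measure.map_apply hg (measurableSet_singleton _), h1, hneg1, rademacher, smul_add, one_div]

end Rademacher

section FlipAt

variable {ι : Type*} [DecidableEq ι]

def flipAt (q : ι) (x : ι → ℝ) : ι → ℝ := update x q (-x q)

@[simp]
lemma flipAt_apply_self (q : ι) (x : ι → ℝ) : flipAt q x q = -x q := update_self _ _ _

lemma flipAt_apply_of_ne {q q' : ι} (h : q' ≠ q) (x : ι → ℝ) : flipAt q x q' = x q' :=
  update_of_ne h _ _

lemma measurePreserving_flipAt [Fintype ι] {ν : ι → Measure ℝ}
    [∀ q, SigmaFinite (ν q)] (q : ι) (hν : MeasurePreserving Neg.neg (ν q) (ν q)) :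
    MeasurePreserving (flipAt q) (Measure.pi ν) (Measure.pi ν) := by
  have hflip : flipAt q = fun x q' => (if q' = q then Neg.neg else id) (x q') := by
    ext x q'
    by_cases h : q' = q
    · subst h; simp [flipAt]
    · simp [flipAt, h]
  rw [hflip]
  refine measurePreserving_pi _ _ fun q' => ?_
  by_cases h : q' = q
  · subst h; simpa using hν
  · simpa [h] using MeasurePreserving.id (ν q')

lemma measurePreserving_flipAt_map_of_iIndepFun [Fintype ι] {Ω : Type*} [MeasurableSpace Ω]
    {μ : Measure Ω} [IsProbabilityMeasure μ] {g : ι → Ω → ℝ} (hg : ∀ q, Measurable (g q))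
    (hind : iIndepFun g μ) (q : ι) (hq : MeasurePreserving Neg.neg (μ.map (g q)) (μ.map (g q))) :
    MeasurePreserving (flipAt q) (μ.map fun ω q' => g q' ω) (μ.map fun ω q' => g q' ω) := by
  rw [hind.map_fun_eq_pi_map fun q' => (hg q').aemeasurable]
  exact measurePreserving_flipAt q hq

end FlipAt

section Symmetrization

variable {Ω E F : Type*} [MeasurableSpace Ω] [MeasurableSpace E] [MeasurableSpace F]
  {μ : Measure Ω}

lemma measurePreserving_prodMap_of_indepFun [IsFiniteMeasure μ] {X : Ω → E} {Z : Ω → F}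
    (hX : AEMeasurable X μ) (hZ : AEMeasurable Z μ) (hXZ : IndepFun X Z μ) {T : E → E}
    (hT : MeasurePreserving T (μ.map X) (μ.map X)) :
    MeasurePreserving (Prod.map T id) (μ.map fun ω => (X ω, Z ω))
      (μ.map fun ω => (X ω, Z ω)) := by
  rw [(indepFun_iff_map_prod_eq_prod_map_map hX hZ).1 hXZ]
  exact hT.prod (MeasurePreserving.id _)

lemma integral_comp_nonneg_of_measurePreserving {V : Ω → E} (hV : Measurable V) {T : E → E}
    (hT : MeasurePreserving T (μ.map V) (μ.map V)) {f : E → ℝ} (hf : Measurable f)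
    (hint : Integrable (fun ω => f (V ω)) μ) (hpos : ∀ ω, 0 ≤ f (V ω) + f (T (V ω))) :
    0 ≤ ∫ ω, f (V ω) ∂μ := by
  rw [← integral_map hV.aemeasurable hf.aestronglyMeasurable]
  have hintV : Integrable f (μ.map V) :=
    (integrable_map_measure hf.aestronglyMeasurable hV.aemeasurable).2 hint
  have hintT : Integrable (fun x => f (T x)) (μ.map V) :=
    (hT.integrable_comp hf.aestronglyMeasurable).2 hintV
  have hposV : ∀ᵐ x ∂μ.map V, 0 ≤ f x + f (T x) :=
    (ae_map_iff hV.aemeasurable (measurableSet_le measurable_const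
      (hf.add (hf.comp hT.measurable)))).2 (ae_of_all _ hpos)
  have hflip : ∫ x, f (T x) ∂μ.map V = ∫ x, f x ∂μ.map V := by
    rw [← integral_map hT.measurable.aemeasurable hf.aestronglyMeasurable, hT.map_eq]
  have := integral_nonneg_of_ae hposV
  rw [integral_add hintV hintT, hflip] at this
  linarith

end Symmetrization

section Softmax

variable {ι : Type*} [Fintype ι]

noncomputable def softmax (y : ι → ℝ) (w : ι) : ℝ := Real.exp (y w) / ∑ w', Real.exp (y w')

lemma softmax_nonneg (y : ι → ℝ) (w : ι) : 0 ≤ softmax y w := by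
  unfold softmax; positivity

lemma softmax_le_one (y : ι → ℝ) (w : ι) : softmax y w ≤ 1 :=
  div_le_one_of_le₀ (Finset.single_le_sum (fun w' _ => (Real.exp_pos (y w')).le)
    (Finset.mem_univ w)) (by positivity)

lemma monotone_softmax_update [DecidableEq ι] (y : ι → ℝ) (w : ι) :
    Monotone fun t => softmax (update y w t) w := by
  set C := ∑ w' ∈ Finset.univ.erase w, Real.exp (y w')
  have hC : 0 ≤ C := by positivity
  have hsoftmax : ∀ t, softmax (update y w t) w = Real.exp t / (Real.exp t + C) := by
    intro t
    rw [softmax, ← Finset.add_sum_erase _ _ (Finset.mem_univ w), update_self]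
    congr 2
    exact Finset.sum_congr rfl fun w' hw' => by rw [update_of_ne (Finset.ne_of_mem_erase hw')]
  intro t t' htt'
  simp only [hsoftmax]
  rw [div_le_div_iff₀ (by positivity) (by positivity)]
  nlinarith [mul_le_mul_of_nonneg_left (Real.exp_le_exp.2 htt') hC]

end Softmax

lemma mul_sub_nonneg_of_monotone {Q : ℝ → ℝ} (hQ : Monotone Q) {e : ℝ} (he : 0 ≤ e) (r : ℝ) :
    0 ≤ r * (Q (r * e) - Q (-(r * e))) := by
  rcases le_total 0 r with hr | hr
  · have : -(r * e) ≤ r * e := by nlinarith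
    exact mul_nonneg hr (sub_nonneg.2 (hQ this))
  · have : r * e ≤ -(r * e) := by nlinarith
    exact mul_nonneg_of_nonpos_of_nonpos hr (sub_nonpos.2 (hQ this))

section SupSup

variable {m n k : ℕ} (α : Fin k → ℝ)

/-- The logits of the model as a function of a sign configuration `x` and of the data
`z = (φ, M)`, so that they can be evaluated on the joint law of `(ξ, (φ, M))`. -/
noncomputable def supsupLogits (x : Fin m × Fin n → ℝ)
    (z : (Fin m → ℝ) × (Fin k → Fin m → Fin n → ℝ)) (w : Fin n) : ℝ :=
  ∑ u, z.1 u * (x (u, w) * Real.sqrt (2 / (m : ℝ))) * ∑ j, α j * z.2 j u w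

noncomputable def supsupGradTerm (i : Fin k) (u : Fin m) (w : Fin n)
    (s : (Fin m × Fin n → ℝ) × ((Fin m → ℝ) × (Fin k → Fin m → Fin n → ℝ))) : ℝ :=
  softmax (supsupLogits α s.1 s.2) w * s.2.1 u * s.1 (u, w) * s.2.2 i u w

lemma measurable_supsupGradTerm (i : Fin k) (u : Fin m) (w : Fin n) :
    Measurable (supsupGradTerm α i u w) := by
  unfold supsupGradTerm softmax supsupLogits
  fun_prop

lemma abs_supsupGradTerm_le (i : Fin k) (u : Fin m) (w : Fin n)
    (s : (Fin m × Fin n → ℝ) × ((Fin m → ℝ) × (Fin k → Fin m → Fin n → ℝ)))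
    (hx : |s.1 (u, w)| ≤ 1) (hb : |s.2.2 i u w| ≤ 1) :
    |supsupGradTerm α i u w s| ≤ |s.2.1 u| := by
  have hp : |softmax (supsupLogits α s.1 s.2) w| ≤ 1 := by
    rw [abs_of_nonneg (softmax_nonneg _ _)]; exact softmax_le_one _ _
  rw [supsupGradTerm, abs_mul, abs_mul, abs_mul]
  calc _ ≤ 1 * |s.2.1 u| * 1 * 1 := by gcongr
    _ = |s.2.1 u| := by ring

lemma supsupLogits_flipAt_of_ne (x : Fin m × Fin n → ℝ)
    (z : (Fin m → ℝ) × (Fin k → Fin m → Fin n → ℝ)) {u : Fin m} {w w' : Fin n} (hw : w' ≠ w) :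
    supsupLogits α (flipAt (u, w) x) z w' = supsupLogits α x z w' := by
  refine Finset.sum_congr rfl fun u' _ => ?_
  rw [flipAt_apply_of_ne (by simp [hw])]

lemma supsupLogits_flipAt_self (x : Fin m × Fin n → ℝ)
    (z : (Fin m → ℝ) × (Fin k → Fin m → Fin n → ℝ)) (u : Fin m) (w : Fin n) :
    supsupLogits α (flipAt (u, w) x) z w = supsupLogits α x z w -
      2 * (z.1 u * x (u, w) * (Real.sqrt (2 / (m : ℝ)) * ∑ j, α j * z.2 j u w)) := by
  have hrest : ∀ u' ∈ Finset.univ.erase u,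
      z.1 u' * (flipAt (u, w) x (u', w) * Real.sqrt (2 / (m : ℝ))) * ∑ j, α j * z.2 j u' w =
        z.1 u' * (x (u', w) * Real.sqrt (2 / (m : ℝ))) * ∑ j, α j * z.2 j u' w :=
    fun u' hu' => by rw [flipAt_apply_of_ne (by simp [Finset.ne_of_mem_erase hu'])]
  unfold supsupLogits
  rw [← Finset.add_sum_erase _ _ (Finset.mem_univ u),
    ← Finset.add_sum_erase _ _ (Finset.mem_univ u), Finset.sum_congr rfl hrest, flipAt_apply_self]
  ring

lemma supsupGradTerm_add_supsupGradTerm_flipAt_nonneg (hα : ∀ j, 0 ≤ α j) (i : Fin k)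
    (u : Fin m) (w : Fin n) (x : Fin m × Fin n → ℝ)
    (z : (Fin m → ℝ) × (Fin k → Fin m → Fin n → ℝ)) (hz : ∀ j, 0 ≤ z.2 j u w) :
    0 ≤ supsupGradTerm α i u w (x, z) + supsupGradTerm α i u w (flipAt (u, w) x, z) := by
  set ℓ := supsupLogits α x z
  set r := z.1 u * x (u, w)
  set e := Real.sqrt (2 / (m : ℝ)) * ∑ j, α j * z.2 j u w
  have he : 0 ≤ e :=
    mul_nonneg (Real.sqrt_nonneg _) (Finset.sum_nonneg fun j _ => mul_nonneg (hα j) (hz j))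
  set Q : ℝ → ℝ := fun t => softmax (update ℓ w (ℓ w - r * e + t)) w
  have hQ : Monotone Q := (monotone_softmax_update ℓ w).comp fun _ _ h => by linarith
  have hsoftmax : softmax ℓ w = Q (r * e) := by simp only [Q, sub_add_cancel, update_eq_self]
  have hsoftmax_flip : softmax (supsupLogits α (flipAt (u, w) x) z) w = Q (-(r * e)) := by
    congr 1
    ext w'
    rcases eq_or_ne w' w with rfl | hw'
    · rw [supsupLogits_flipAt_self, update_self]; ring
    · rw [update_of_ne hw', supsupLogits_flipAt_of_ne _ _ _ hw']
  have hsum : supsupGradTerm α i u w (x, z) + supsupGradTerm α i u w (flipAt (u, w) x, z) =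
      r * (Q (r * e) - Q (-(r * e))) * z.2 i u w := by
    simp only [supsupGradTerm, flipAt_apply_self]
    rw [hsoftmax, hsoftmax_flip]
    ring
  rw [hsum]
  exact mul_nonneg (mul_sub_nonneg_of_monotone hQ he r) (hz i)

end SupSup

theorem supsup_expected_grad_other_task_nonneg_general
    {Ω : Type*} [MeasurableSpace Ω] (μ : Measure Ω) [IsProbabilityMeasure μ]
    (m n k : ℕ)
    (v : Fin n) (i : Fin k) (α : Fin k → ℝ) (hα : ∀ j, 0 ≤ α j)
    (φ : Ω → Fin m → ℝ) (M : Fin k → Ω → Fin m → Fin n → ℝ)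
    (ξ : Fin m → Fin n → Ω → ℝ)
    (hφmeas : Measurable φ) (hMmeas : ∀ j, Measurable (M j))
    (hξmeas : ∀ u w, Measurable (ξ u w))
    (hφint : ∀ u, Integrable (fun ω => |φ ω u|) μ)
    (hM01 : ∀ j ω u w, M j ω u w = 0 ∨ M j ω u w = 1)
    (hξ1 : ∀ u w, μ ((ξ u w) ⁻¹' {1}) = 1 / 2)
    (hξneg1 : ∀ u w, μ ((ξ u w) ⁻¹' {-1}) = 1 / 2)
    (hξiid : ProbabilityTheory.iIndepFun
      (fun p : Fin m × Fin n => ξ p.1 p.2) μ)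
    (hindep : ProbabilityTheory.IndepFun
      (fun ω => fun p : Fin m × Fin n => ξ p.1 p.2 ω)
      (fun ω => (φ ω, fun j => M j ω)) μ)
    (y : Ω → Fin n → ℝ)
    (hy : ∀ ω w, y ω w =
      ∑ u : Fin m, φ ω u * (ξ u w ω * Real.sqrt (2 / (m : ℝ))) *
        ∑ j : Fin k, α j * M j ω u w)
    (p : Ω → Fin n → ℝ)
    (hp : ∀ ω w, p ω w = Real.exp (y ω w) / ∑ w' : Fin n, Real.exp (y ω w')) :
    (∀ u : Fin m, 0 ≤ ∫ ω, p ω v * φ ω u * ξ u v ω * M i ω u v ∂μ) ∧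
      0 ≤ ∫ ω, ∑ w : Fin n, ∑ u : Fin m,
          p ω w * φ ω u * ξ u w ω * M i ω u w ∂μ := by
  set X : Ω → Fin m × Fin n → ℝ := fun ω q => ξ q.1 q.2 ω
  set Z := fun ω => (φ ω, fun j => M j ω)
  have hX : Measurable X := measurable_pi_lambda _ fun q => hξmeas q.1 q.2
  have hZ : Measurable Z := hφmeas.prodMk (measurable_pi_lambda _ hMmeas)
  have hM_nonneg : ∀ j ω u w, 0 ≤ M j ω u w := fun j ω u w => by
    rcases hM01 j ω u w with h | h <;> simp [h]
  have hterm : ∀ w u ω, p ω w * φ ω u * ξ u w ω * M i ω u w =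
      supsupGradTerm α i u w (X ω, Z ω) := fun w u ω => by simp only [hp, hy]; rfl
  have hint : ∀ w u, Integrable (fun ω => supsupGradTerm α i u w (X ω, Z ω)) μ := by
    intro w u
    refine (hφint u).mono' ((measurable_supsupGradTerm α i u w).comp
      (hX.prodMk hZ)).aestronglyMeasurable ?_
    filter_upwards [ae_of_ae_map (hξmeas u w).aemeasurable
      (ae_map_mem_one_neg_one (hξmeas u w) (hξ1 u w) (hξneg1 u w))] with ω hξω
    refine abs_supsupGradTerm_le α i u w _ ?_ ?_
    · rcases hξω with h | h <;> simp [X, Set.mem_singleton_iff.1 h]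
    · rcases hM01 i ω u w with h | h <;> simp [Z, h]
  have key : ∀ w u, 0 ≤ ∫ ω, supsupGradTerm α i u w (X ω, Z ω) ∂μ := fun w u =>
    integral_comp_nonneg_of_measurePreserving (hX.prodMk hZ)
      (measurePreserving_prodMap_of_indepFun hX.aemeasurable hZ.aemeasurable hindep
        (measurePreserving_flipAt_map_of_iIndepFun (fun q => hξmeas q.1 q.2) hξiid (u, w)
          (map_eq_rademacher (hξmeas u w) (hξ1 u w) (hξneg1 u w) ▸
            measurePreserving_neg_rademacher)))
      (measurable_supsupGradTerm α i u w) (hint w u) fun ω =>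
        supsupGradTerm_add_supsupGradTerm_flipAt_nonneg α hα i u w _ _ fun j => hM_nonneg j ω u w
  simp only [hterm]
  refine ⟨key v, ?_⟩
  rw [integral_finsetSum _ fun w _ => integrable_finsetSum _ fun u _ => hint w u]
  refine Finset.sum_nonneg fun w _ => ?_
  rw [integral_finsetSum _ fun u _ => hint w u]
  exact Finset.sum_nonneg fun u _ => key w u

/-- **Lemma 2.** In the SupSup single-layer model with fixed
random signed-constant weights `W u w = ξ u w · √(2/m)` (with `ξ` i.i.d.
uniform on `{-1, +1}` and independent of the data features `φ` and the binary
masks `M¹, …, Mᵏ`), nonnegative mixing coefficients `α`, superimposed logits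
`y ω w = ∑ u, φ ω u · (ξ u w ω · √(2/m)) · ∑ j, α j · M j ω u w` and softmax
probabilities `p ω w = exp (y ω w) / ∑ w', exp (y ω w')`, for every `u` we
have `E[p_v · φ_u · ξ_{u v} · M^i_{u v}] ≥ 0`; consequently
`E[∑ v ∑ u, p_v · φ_u · ξ_{u v} · M^i_{u v}] ≥ 0`, i.e. the expected negative
partial derivative of `G(y) = log ∑ exp` w.r.t. `α i` is `≤ 0`. -/
theorem supsup_expected_grad_other_task_nonneg
    {Ω : Type*} [MeasurableSpace Ω] (μ : Measure Ω) [IsProbabilityMeasure μ]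
    (m n k : ℕ) (hm : 0 < m) (hn : 2 ≤ n) (hk : 0 < k)
    (v : Fin n) (i : Fin k) (α : Fin k → ℝ) (hα : ∀ j, 0 ≤ α j)
    (φ : Ω → Fin m → ℝ) (M : Fin k → Ω → Fin m → Fin n → ℝ)
    (ξ : Fin m → Fin n → Ω → ℝ)
    (hφmeas : Measurable φ) (hMmeas : ∀ j, Measurable (M j))
    (hξmeas : ∀ u w, Measurable (ξ u w))
    (hφint : ∀ u, Integrable (fun ω => |φ ω u|) μ)
    (hM01 : ∀ j ω u w, M j ω u w = 0 ∨ M j ω u w = 1)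
    (hξ1 : ∀ u w, μ ((ξ u w) ⁻¹' {1}) = 1 / 2)
    (hξneg1 : ∀ u w, μ ((ξ u w) ⁻¹' {-1}) = 1 / 2)
    (hξiid : ProbabilityTheory.iIndepFun
      (fun p : Fin m × Fin n => ξ p.1 p.2) μ)
    (hindep : ProbabilityTheory.IndepFun
      (fun ω => fun p : Fin m × Fin n => ξ p.1 p.2 ω)
      (fun ω => (φ ω, fun j => M j ω)) μ)
    (y : Ω → Fin n → ℝ)
    (hy : ∀ ω w, y ω w =
      ∑ u : Fin m, φ ω u * (ξ u w ω * Real.sqrt (2 / (m : ℝ))) *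
        ∑ j : Fin k, α j * M j ω u w)
    (p : Ω → Fin n → ℝ)
    (hp : ∀ ω w, p ω w = Real.exp (y ω w) / ∑ w' : Fin n, Real.exp (y ω w')) :
    (∀ u : Fin m, 0 ≤ ∫ ω, p ω v * φ ω u * ξ u v ω * M i ω u v ∂μ) ∧
      0 ≤ ∫ ω, ∑ w : Fin n, ∑ u : Fin m,
          p ω w * φ ω u * ξ u w ω * M i ω u w ∂μ :=
  supsup_expected_grad_other_task_nonneg_general μ m n k v i α hα φ M ξ hφmeas hMmeas hξmeas hφint
    hM01 hξ1 hξneg1 hξiid hindep y hy p hp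
end
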